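/- arXiv:2211.10234 — 4 statements merged into one kernel-verified Lean document; each statement's English description precedes it below -/
import Mathlib

section
/- For a 2×2 upper triangular complex matrix R̂ = [[a, b], [0, c]] with |a| ≥ |c|, the operator 2-norm of R̂ is at most √(|a|² + |a||b| + |b|²). -/
/-! Writing `s = |x₀|`, `t = |x₁|` for `x ∈ ℂ²`, the triangle inequality bounds `‖R̂ x‖²` by
`(|a| s + |b| t)² + (|c| t)²`, and `|c| ≤ |a|` plus `2st ≤ s² + t²` bound this by
`(|a|² + |a||b| + |b|²)(s² + t²)`. -/

noncomputable def l2norm (A : Matrix (Fin 2) (Fin 2) ℂ) : ℝ :=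
  ‖Matrix.toEuclideanCLM (𝕜 := ℂ) (n := Fin 2) A‖

lemma ContinuousLinearMap.opNorm_le_sqrt_of_sq_le {𝕜 E F : Type*} [NontriviallyNormedField 𝕜]
    [SeminormedAddCommGroup E] [SeminormedAddCommGroup F] [NormedSpace 𝕜 E] [NormedSpace 𝕜 F]
    (f : E →L[𝕜] F) {K : ℝ} (h : ∀ x, ‖f x‖ ^ 2 ≤ K * ‖x‖ ^ 2) : ‖f‖ ≤ √K := by
  refine f.opNorm_le_bound (Real.sqrt_nonneg K) fun x => ?_
  calc ‖f x‖ = √(‖f x‖ ^ 2) := (Real.sqrt_sq (norm_nonneg _)).symm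
    _ ≤ √(K * ‖x‖ ^ 2) := Real.sqrt_le_sqrt (h x)
    _ = √K * ‖x‖ := by rw [Real.sqrt_mul' K (sq_nonneg _), Real.sqrt_sq (norm_nonneg x)]

lemma EuclideanSpace.norm_sq_fin_two {𝕜 : Type*} [RCLike 𝕜] (x : EuclideanSpace 𝕜 (Fin 2)) :
    ‖x‖ ^ 2 = ‖x 0‖ ^ 2 + ‖x 1‖ ^ 2 := by
  simp [EuclideanSpace.norm_sq_eq, Fin.sum_univ_two]

lemma Matrix.norm_toEuclideanCLM_upperTriangular_sq_le {𝕜 : Type*} [RCLike 𝕜] (a b c : 𝕜)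
    (x : EuclideanSpace 𝕜 (Fin 2)) :
    ‖toEuclideanCLM (𝕜 := 𝕜) (n := Fin 2) !![a, b; 0, c] x‖ ^ 2 ≤
      (‖a‖ * ‖x 0‖ + ‖b‖ * ‖x 1‖) ^ 2 + (‖c‖ * ‖x 1‖) ^ 2 := by
  have hx : ∀ i, toEuclideanCLM (𝕜 := 𝕜) (n := Fin 2) !![a, b; 0, c] x i =
      (!![a, b; 0, c]).mulVec (WithLp.ofLp x) i := fun i => rfl
  rw [EuclideanSpace.norm_sq_fin_two, hx, hx]
  simp only [mulVec, dotProduct, Fin.sum_univ_two, of_apply, cons_val', cons_val_zero,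
    cons_val_one, empty_val', cons_val_fin_one, zero_mul, zero_add, norm_mul]
  gcongr
  exact (norm_add_le _ _).trans_eq (by rw [norm_mul, norm_mul])

lemma upperTriangular_quadratic_bound {α β γ s t : ℝ} (hα : 0 ≤ α) (hβ : 0 ≤ β) (hγ : 0 ≤ γ)
    (hγα : γ ≤ α) :
    (α * s + β * t) ^ 2 + (γ * t) ^ 2 ≤ (α ^ 2 + α * β + β ^ 2) * (s ^ 2 + t ^ 2) := by
  -- the gap is `αβ (s - t)² + β² s² + (α² - γ²) t²`
  have hγ2 : γ ^ 2 ≤ α ^ 2 := pow_le_pow_left₀ hγ hγα 2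
  nlinarith [mul_le_mul_of_nonneg_right hγ2 (sq_nonneg t),
    mul_nonneg (mul_nonneg hα hβ) (sq_nonneg (s - t)), mul_nonneg (sq_nonneg β) (sq_nonneg s)]

theorem stmt9 (a b c : ℂ) (h : ‖c‖ ≤ ‖a‖) :
    l2norm !![a, b; 0, c] ≤
      Real.sqrt (‖a‖ ^ 2 + ‖a‖ * ‖b‖ + ‖b‖ ^ 2) := by
  refine ContinuousLinearMap.opNorm_le_sqrt_of_sq_le (𝕜 := ℂ) _ fun x => ?_
  rw [EuclideanSpace.norm_sq_fin_two x]
  exact (Matrix.norm_toEuclideanCLM_upperTriangular_sq_le a b c x).trans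
    (upperTriangular_quadratic_bound (norm_nonneg a) (norm_nonneg b) (norm_nonneg c) h)
end

section
/- Let λ_+, λ_- ∈ ℂ with λ_+ + λ_- = β_i ∈ ℝ and λ_+λ_- = β ∈ ℝ, and |λ_±| ≤ ρ ≤ 1. Then for every k ≥ 1, the k-th power of M = [[0,1],[-β,β_i]] satisfies ‖M^k‖₂ ≤ 2·ρ^{k-1}·(k+1). -/
/-!
With `h n = ∑_{i<n} λ₊^i λ₋^(n-1-i)`, one has `h (n+2) = (λ₊ + λ₋) h (n+1) - λ₊λ₋ h n`, the
recurrence of the powers of the companion matrix `M`; hence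
`M^(n+1) = !![-β h n, h (n+1); -β h (n+1), h (n+2)]`. As a sum of `n` monomials of degree `n - 1`,
`|h n| ≤ n ρ^(n-1)`, so with `ρ ≤ 1` every entry of `M^k` is at most `(k+1) ρ^(k-1)`. Finally the
Euclidean operator norm is bounded by the Frobenius norm, i.e. by twice the largest entry of a
`2 × 2` matrix.
-/

noncomputable def l2normR (A : Matrix (Fin 2) (Fin 2) ℝ) : ℝ :=
  ‖Matrix.toEuclideanCLM (𝕜 := ℝ) (n := Fin 2) A‖

open Finset

section geomSum₂

variable {R : Type*}

def geomSum₂ [CommRing R] (x y : R) (n : ℕ) : R :=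
  ∑ i ∈ range n, x ^ i * y ^ (n - 1 - i)

theorem geomSum₂_succ [CommRing R] (x y : R) (n : ℕ) :
    geomSum₂ x y (n + 1) = x ^ n + y * geomSum₂ x y n := by
  simpa [geomSum₂] using geom_sum₂_succ_eq x y (n := n)

theorem geomSum₂_add_two [CommRing R] (x y : R) (n : ℕ) :
    geomSum₂ x y (n + 2) = (x + y) * geomSum₂ x y (n + 1) - x * y * geomSum₂ x y n := by
  rw [geomSum₂_succ x y (n + 1), geomSum₂_succ x y n]
  ring

theorem norm_geomSum₂_le [SeminormedCommRing R] [NormOneClass R] {x y : R} {ρ : ℝ}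
    (hx : ‖x‖ ≤ ρ) (hy : ‖y‖ ≤ ρ) (n : ℕ) :
    ‖geomSum₂ x y n‖ ≤ n * ρ ^ (n - 1) := by
  have hρ : 0 ≤ ρ := (norm_nonneg x).trans hx
  rw [← geom_sum₂_self]
  refine (norm_sum_le _ _).trans (sum_le_sum fun i _ => ?_)
  calc ‖x ^ i * y ^ (n - 1 - i)‖ ≤ ‖x‖ ^ i * ‖y‖ ^ (n - 1 - i) :=
        (norm_mul_le _ _).trans (mul_le_mul (norm_pow_le _ _) (norm_pow_le _ _) (norm_nonneg _)
          (by positivity))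
    _ ≤ ρ ^ i * ρ ^ (n - 1 - i) := by gcongr

end geomSum₂

namespace Matrix

theorem companion_pow_succ {R : Type*} [CommRing R] (x y : R) (n : ℕ) :
    !![0, 1; -(x * y), x + y] ^ (n + 1) =
      !![-(x * y) * geomSum₂ x y n, geomSum₂ x y (n + 1);
         -(x * y) * geomSum₂ x y (n + 1), geomSum₂ x y (n + 2)] := by
  induction n with
  | zero => simp [geomSum₂, sum_range_succ, add_comm]
  | succ n ih =>
    rw [pow_succ, ih, mul_fin_two]
    ext i j
    fin_cases i <;> fin_cases j <;>
      simp only [Fin.zero_eta, Fin.isValue, Fin.mk_one, of_apply, cons_val', cons_val_zero,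
        cons_val_one, cons_val_fin_one, geomSum₂_add_two x y n, geomSum₂_add_two x y (n + 1)] <;>
      ring

theorem norm_companion_pow_succ_apply_le {R : Type*} [SeminormedCommRing R] [NormOneClass R]
    {x y : R} {ρ : ℝ} (hx : ‖x‖ ≤ ρ) (hy : ‖y‖ ≤ ρ) (hρ : ρ ≤ 1) (n : ℕ) (i j : Fin 2) :
    ‖(!![0, 1; -(x * y), x + y] ^ (n + 1)) i j‖ ≤ (n + 2) * ρ ^ n := by
  have hρ₀ : 0 ≤ ρ := (norm_nonneg x).trans hx
  have hxy : ‖-(x * y)‖ ≤ ρ ^ 2 := by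
    rw [norm_neg, sq]
    exact (norm_mul_le _ _).trans (mul_le_mul hx hy (norm_nonneg _) hρ₀)
  have hG := norm_geomSum₂_le hx hy
  have hdom {c : ℝ} {e : ℕ} (hc : c ≤ n + 2) (he : n ≤ e) :
      c * ρ ^ e ≤ (n + 2) * ρ ^ n :=
    mul_le_mul hc (pow_le_pow_of_le_one hρ₀ hρ he) (by positivity) (by positivity)
  rw [companion_pow_succ]
  fin_cases i <;> fin_cases j <;>
    simp only [Fin.zero_eta, Fin.isValue, Fin.mk_one, of_apply, cons_val', cons_val_zero,
      cons_val_one, cons_val_fin_one]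
  · calc ‖-(x * y) * geomSum₂ x y n‖ ≤ ρ ^ 2 * (n * ρ ^ (n - 1)) :=
          (norm_mul_le _ _).trans (mul_le_mul hxy (hG n) (norm_nonneg _) (by positivity))
      _ = n * ρ ^ (n - 1 + 2) := by ring
      _ ≤ (n + 2) * ρ ^ n := hdom (by linarith) (by omega)
  · calc ‖geomSum₂ x y (n + 1)‖ ≤ (n + 1) * ρ ^ n := by simpa using hG (n + 1)
      _ ≤ (n + 2) * ρ ^ n := hdom (by linarith) le_rfl
  · calc ‖-(x * y) * geomSum₂ x y (n + 1)‖ ≤ ρ ^ 2 * ((n + 1) * ρ ^ n) := by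
          refine (norm_mul_le _ _).trans (mul_le_mul hxy ?_ (norm_nonneg _) (by positivity))
          simpa using hG (n + 1)
      _ = (n + 1) * ρ ^ (n + 2) := by ring
      _ ≤ (n + 2) * ρ ^ n := hdom (by linarith) (by omega)
  · calc ‖geomSum₂ x y (n + 2)‖ ≤ (n + 2) * ρ ^ (n + 1) := by simpa using hG (n + 2)
      _ ≤ (n + 2) * ρ ^ n := hdom le_rfl (by omega)

variable {n : Type*} [Fintype n] [DecidableEq n]

theorem norm_toEuclideanCLM_le_sqrt_sum_sq (A : Matrix n n ℝ) :
    ‖toEuclideanCLM (𝕜 := ℝ) A‖ ≤ √(∑ i, ∑ j, A i j ^ 2) := by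
  refine ContinuousLinearMap.opNorm_le_bound _ (Real.sqrt_nonneg _) fun x => ?_
  rw [← Real.sqrt_sq (norm_nonneg _), ← Real.sqrt_sq (norm_nonneg x), ← Real.sqrt_mul
    (by positivity)]
  refine Real.sqrt_le_sqrt ?_
  rw [EuclideanSpace.real_norm_sq_eq, EuclideanSpace.real_norm_sq_eq, sum_mul]
  refine sum_le_sum fun i _ => ?_
  simpa [mulVec, dotProduct] using sum_mul_sq_le_sq_mul_sq univ (A i) (fun j => x j)

theorem norm_toEuclideanCLM_le_card_mul {A : Matrix n n ℝ} {c : ℝ} (h : ∀ i j, |A i j| ≤ c) :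
    ‖toEuclideanCLM (𝕜 := ℝ) A‖ ≤ Fintype.card n * c := by
  have hnc : 0 ≤ Fintype.card n * c := by
    rcases isEmpty_or_nonempty n with _ | ⟨⟨i⟩⟩
    · simp
    · exact mul_nonneg (Nat.cast_nonneg _) ((abs_nonneg _).trans (h i i))
  calc ‖toEuclideanCLM (𝕜 := ℝ) A‖ ≤ √(∑ i, ∑ j, A i j ^ 2) :=
        norm_toEuclideanCLM_le_sqrt_sum_sq A
    _ ≤ √((Fintype.card n * c) ^ 2) := by
      refine Real.sqrt_le_sqrt ?_
      calc ∑ i, ∑ j, A i j ^ 2 ≤ ∑ _i : n, ∑ _j : n, c ^ 2 :=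
          sum_le_sum fun i _ => sum_le_sum fun j _ => sq_le_sq.mpr ((h i j).trans (le_abs_self c))
        _ = _ := by simp only [sum_const, card_univ, nsmul_eq_mul]; ring
    _ = Fintype.card n * c := Real.sqrt_sq hnc

end Matrix

theorem stmt13 (β βi ρ : ℝ) (lp lm : ℂ)
    (hsum : lp + lm = (βi : ℂ)) (hprod : lp * lm = (β : ℂ))
    (hlp : ‖lp‖ ≤ ρ) (hlm : ‖lm‖ ≤ ρ) (hρ : ρ ≤ 1)
    (M : Matrix (Fin 2) (Fin 2) ℝ) (hM : M = !![0, 1; -β, βi]) :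
    ∀ k : ℕ, 1 ≤ k → l2normR (M ^ k) ≤ 2 * ρ ^ (k - 1) * (k + 1) := by
  intro k hk
  obtain ⟨n, rfl⟩ : ∃ n, k = n + 1 := ⟨k - 1, by omega⟩
  have hMℂ : M.map Complex.ofRealHom = !![0, 1; -(lp * lm), lp + lm] := by
    rw [hM, hprod, hsum]
    ext i j
    fin_cases i <;> fin_cases j <;> simp
  have hentry (i j : Fin 2) : |(M ^ (n + 1)) i j| ≤ (n + 2) * ρ ^ n := by
    have := Matrix.norm_companion_pow_succ_apply_le hlp hlm hρ n i j
    rwa [← hMℂ, ← Matrix.map_pow, Matrix.map_apply, Complex.ofRealHom_eq_coe, Complex.norm_real,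
      Real.norm_eq_abs] at this
  calc l2normR (M ^ (n + 1)) ≤ Fintype.card (Fin 2) * ((n + 2) * ρ ^ n) :=
        Matrix.norm_toEuclideanCLM_le_card_mul hentry
    _ = 2 * ρ ^ (n + 1 - 1) * ((n + 1 : ℕ) + 1) := by
      simp only [Fintype.card_fin, add_tsub_cancel_right]; push_cast; ring
end

section
/- Suppose if λ_+ = λ_- = λ with |λ| = ρ ≤ 1 and λ real, then for k ≥ 2 the matrix M^k (with M = [[0,1],[-λ², 2λ]]) satisfies ‖M^k‖₂ ≥ 2·ρ^{k+1}·(k-1). -/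
/-!
For `t = ±1` the vectors `x = (1, t)` and `y = (1, -t)` have norm `√2`, and the explicit powers of
`M` give `x ⬝ᵥ M^k y = -t k λ^(k-1) (λ + t)²`. Taking for `t` the sign of `λ` yields
`2 ‖M^k‖ ≥ k ρ^(k-1) (1 + ρ)²`, which dominates `4 (k - 1) ρ^(k+1)` because `1 + ρ ≥ 2ρ`.
-/

open Matrix

lemma abs_dotProduct_mulVec_le_opNorm {n : Type*} [Fintype n] [DecidableEq n]
    (A : Matrix n n ℝ) (x y : EuclideanSpace ℝ n) :
    |x ⬝ᵥ A *ᵥ y| ≤ ‖toEuclideanCLM (𝕜 := ℝ) A‖ * ‖x‖ * ‖y‖ := by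
  rw [← inner_toEuclideanCLM]
  calc |inner ℝ x (toEuclideanCLM (𝕜 := ℝ) A y)| ≤ ‖x‖ * ‖toEuclideanCLM (𝕜 := ℝ) A y‖ :=
        abs_real_inner_le_norm _ _
    _ ≤ ‖x‖ * (‖toEuclideanCLM (𝕜 := ℝ) A‖ * ‖y‖) := by
        gcongr
        exact ContinuousLinearMap.le_opNorm _ _
    _ = ‖toEuclideanCLM (𝕜 := ℝ) A‖ * ‖x‖ * ‖y‖ := by ring

lemma norm_toLp_one_of_sq_eq_one {t : ℝ} (ht : t ^ 2 = 1) :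
    ‖WithLp.toLp 2 ![1, t]‖ = √2 := by
  rw [EuclideanSpace.norm_eq]
  norm_num [Fin.sum_univ_two, ht]

lemma abs_dotProduct_mulVec_le_two_mul_l2normR (A : Matrix (Fin 2) (Fin 2) ℝ) {s t : ℝ}
    (hs : s ^ 2 = 1) (ht : t ^ 2 = 1) : |![1, s] ⬝ᵥ A *ᵥ ![1, t]| ≤ 2 * l2normR A := by
  have h := abs_dotProduct_mulVec_le_opNorm A (WithLp.toLp 2 ![1, s]) (WithLp.toLp 2 ![1, t])
  rwa [norm_toLp_one_of_sq_eq_one hs, norm_toLp_one_of_sq_eq_one ht, mul_assoc,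
    Real.mul_self_sqrt zero_le_two, mul_comm] at h

def doubleRootCompanion (lam : ℝ) : Matrix (Fin 2) (Fin 2) ℝ :=
  !![0, 1; -lam ^ 2, 2 * lam]

-- At `k = 0` the truncated exponent `k - 1` is harmless: its coefficient is `k = 0`.
lemma doubleRootCompanion_pow (lam : ℝ) (k : ℕ) :
    doubleRootCompanion lam ^ k =
      !![-((k : ℝ) - 1) * lam ^ k, k * lam ^ (k - 1); -k * lam ^ (k + 1), (k + 1) * lam ^ k] := by
  induction k with
  | zero => simp [Matrix.one_fin_two]
  | succ k ih =>
    rw [pow_succ, ih, doubleRootCompanion, Matrix.mul_fin_two]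
    rcases k with _ | k
    · norm_num
    · simp only [Nat.add_sub_cancel]
      push_cast
      ext i j
      fin_cases i <;> fin_cases j <;> simp <;> ring

lemma dotProduct_doubleRootCompanion_pow_mulVec (lam : ℝ) {t : ℝ} (ht : t ^ 2 = 1) (k : ℕ) :
    ![1, t] ⬝ᵥ doubleRootCompanion lam ^ k *ᵥ ![1, -t] =
      -(t * k * lam ^ (k - 1) * (lam + t) ^ 2) := by
  rw [doubleRootCompanion_pow]
  simp only [dotProduct, mulVec, Fin.sum_univ_two, of_apply, cons_val', cons_val_zero,
    cons_val_one, cons_val_fin_one]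
  rcases k with _ | k
  · rcases sq_eq_one_iff.1 ht with rfl | rfl <;> norm_num
  · simp only [Nat.add_sub_cancel]
    push_cast
    rcases sq_eq_one_iff.1 ht with rfl | rfl <;> ring

lemma le_two_mul_l2normR_doubleRootCompanion_pow (lam : ℝ) (k : ℕ) :
    k * |lam| ^ (k - 1) * (|lam| + 1) ^ 2 ≤ 2 * l2normR (doubleRootCompanion lam ^ k) := by
  obtain ⟨t, ht, ht_lam⟩ : ∃ t : ℝ, t ^ 2 = 1 ∧ t * lam = |lam| := by
    rcases le_or_gt 0 lam with h | h
    · exact ⟨1, by norm_num, by simp [abs_of_nonneg h]⟩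
    · exact ⟨-1, by norm_num, by simp [abs_of_neg h]⟩
  have h_sq : (lam + t) ^ 2 = (|lam| + 1) ^ 2 := by
    rw [← ht_lam]
    linear_combination (1 - lam ^ 2) * ht
  have h_abs_t : |t| = 1 := by
    rw [← pow_eq_one_iff_of_nonneg (abs_nonneg t) two_ne_zero, sq_abs, ht]
  have h := abs_dotProduct_mulVec_le_two_mul_l2normR (doubleRootCompanion lam ^ k) ht
    (by rwa [neg_sq])
  rw [dotProduct_doubleRootCompanion_pow_mulVec lam ht, abs_neg, h_sq] at h
  simpa [abs_mul, h_abs_t, abs_pow] using h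

theorem stmt15 (lam ρ : ℝ) (hlam : |lam| = ρ) (hρ : ρ ≤ 1)
    (M : Matrix (Fin 2) (Fin 2) ℝ) (hM : M = !![0, 1; -lam ^ 2, 2 * lam]) :
    ∀ k : ℕ, 2 ≤ k → 2 * ρ ^ (k + 1) * ((k : ℝ) - 1) ≤ l2normR (M ^ k) := by
  intro k hk
  have hρ0 : 0 ≤ ρ := hlam ▸ abs_nonneg lam
  have h_bound : k * ρ ^ (k - 1) * (ρ + 1) ^ 2 ≤ 2 * l2normR (M ^ k) := by
    rw [hM, ← hlam]
    exact le_two_mul_l2normR_doubleRootCompanion_pow lam k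
  have h_pow : ρ ^ (k + 1) = ρ ^ (k - 1) * ρ ^ 2 := by
    rw [← pow_add]
    congr 1
    omega
  calc 2 * ρ ^ (k + 1) * ((k : ℝ) - 1) ≤ 2 * ρ ^ (k + 1) * k := by gcongr; linarith
    _ = k * ρ ^ (k - 1) * (2 * ρ) ^ 2 / 2 := by rw [h_pow]; ring
    _ ≤ k * ρ ^ (k - 1) * (ρ + 1) ^ 2 / 2 := by gcongr; linarith
    _ ≤ l2normR (M ^ k) := by linarith
end

section
/- Let κ > 1, set a := 1/κ, β := (1-√a)²/(1-a). Then for every α_i with 1/κ ≤ α_i ≤ 1, one has (1+β)²(1-α_i) ≤ 4β, and hence √(β(1-α_i)) ≤ 1 - 1/√κ. -/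
theorem stmt19 (κ : ℝ) (hκ : 1 < κ) (a β : ℝ) (ha : a = 1 / κ)
    (hβ : β = (1 - Real.sqrt a) ^ 2 / (1 - a)) :
    ∀ αi : ℝ, 1 / κ ≤ αi → αi ≤ 1 →
      (1 + β) ^ 2 * (1 - αi) ≤ 4 * β ∧
      Real.sqrt (β * (1 - αi)) ≤ 1 - 1 / Real.sqrt κ := by
  have hκ0 : (0:ℝ) < κ := by linarith
  have ha0 : 0 < a := by rw [ha]; positivity
  have ha1 : a < 1 := by rw [ha, div_lt_one hκ0]; linarith
  set s := Real.sqrt a with hs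
  have hs0 : 0 < s := Real.sqrt_pos.mpr ha0
  have hss : s ^ 2 = a := Real.sq_sqrt ha0.le
  have hs1 : s < 1 := by nlinarith
  have hfac : 1 - a = (1 - s) * (1 + s) := by nlinarith
  have h1s : (0:ℝ) < 1 + s := by linarith
  have hβ' : β = (1 - s) / (1 + s) := by
    rw [hβ, hfac, pow_two, mul_div_mul_left _ _ (by linarith : (1:ℝ) - s ≠ 0)]
  have hβeq : β * (1 + s) = 1 - s := by
    rw [hβ']; field_simp
  have hβpos : 0 ≤ β := by rw [hβ']; exact div_nonneg (by linarith) h1s.le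
  have h1β : 1 + β = 2 / (1 + s) := by
    rw [hβ']; field_simp; ring
  have key : (1 + β) ^ 2 * (1 - a) = 4 * β := by
    rw [h1β, hβ', hfac]; field_simp; ring
  have key2 : β * (1 - a) = (1 - s) ^ 2 := by
    rw [hfac]; linear_combination (1 - s) * hβeq
  intro αi hl hu
  have hαa : a ≤ αi := ha ▸ hl
  refine ⟨?_, ?_⟩
  · calc (1 + β) ^ 2 * (1 - αi) ≤ (1 + β) ^ 2 * (1 - a) := by
          apply mul_le_mul_of_nonneg_left (by linarith) (by positivity)
      _ = 4 * β := key
  · have hrhs : 1 - 1 / Real.sqrt κ = 1 - s := by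
      rw [hs, ha, one_div κ, Real.sqrt_inv, one_div]
    rw [hrhs]
    have hle : β * (1 - αi) ≤ (1 - s) ^ 2 := by
      calc β * (1 - αi) ≤ β * (1 - a) := by
            apply mul_le_mul_of_nonneg_left (by linarith) hβpos
        _ = (1 - s) ^ 2 := key2
    calc Real.sqrt (β * (1 - αi)) ≤ Real.sqrt ((1 - s) ^ 2) := Real.sqrt_le_sqrt hle
      _ = 1 - s := by rw [Real.sqrt_sq (by linarith)]
end
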